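/- arXiv:1501.02753 — 7 statements merged into one kernel-verified Lean document; each statement's English description precedes it below -/
import Mathlib

section
/- Let N ⋊ Q be a semidirect product, G a group, and ρ : N → G a homomorphism whose image has trivial centralizer in G. Suppose there exists a family (g_β)_{β∈Q} of elements of G such that ρ(β⁻¹αβ) = g_β⁻¹ ρ(α) g_β for all α ∈ N and β ∈ Q. Then the family (g_β) is unique, the map β ↦ g_β is a group homomorphism Q → G, and the assignment αβ ↦ ρ(α)g_β defines a homomorphism N ⋊ Q → G extending ρ. -/
/-- If `ρ : N →* G` has image with trivial centralizer in `G` and a family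
`(g β)` satisfies `ρ(β⁻¹αβ) = (g β)⁻¹ ρ(α) (g β)` (in the semidirect product `N ⋊[φ] Q`,
`β⁻¹ α β = φ(β)⁻¹ α`), then this family is unique, `β ↦ g β` is a homomorphism, and
`αβ ↦ ρ(α) g(β)` defines a homomorphism `N ⋊[φ] Q →* G` extending `ρ`. -/
theorem extension_from_intertwining_family
    {N Q G : Type*} [Group N] [Group Q] [Group G]
    (φ : Q →* MulAut N) (ρ : N →* G)
    (hcent : Subgroup.centralizer (Set.range ρ) = ⊥)
    (g : Q → G)
    (hg : ∀ (α : N) (β : Q), ρ (φ β⁻¹ α) = (g β)⁻¹ * ρ α * g β) :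
    (∀ g' : Q → G, (∀ (α : N) (β : Q), ρ (φ β⁻¹ α) = (g' β)⁻¹ * ρ α * g' β) → g' = g) ∧
    (∀ β₁ β₂ : Q, g (β₁ * β₂) = g β₁ * g β₂) ∧
    ∃ ρhat : N ⋊[φ] Q →* G,
      (∀ α : N, ρhat (SemidirectProduct.inl α) = ρ α) ∧
      (∀ β : Q, ρhat (SemidirectProduct.inr β) = g β) ∧
      (∀ (α : N) (β : Q),
        ρhat (SemidirectProduct.inl α * SemidirectProduct.inr β) = ρ α * g β) := by
  have key : ∀ c : G, (∀ α : N, ρ α * c = c * ρ α) → c = 1 := by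
    intro c hc
    have hmem : c ∈ Subgroup.centralizer (Set.range ρ) := by
      rw [Subgroup.mem_centralizer_iff]
      rintro x ⟨α, rfl⟩
      exact hc α
    rw [hcent, Subgroup.mem_bot] at hmem
    exact hmem
  have key2 : ∀ a b : G, (∀ α : N, a⁻¹ * ρ α * a = b⁻¹ * ρ α * b) → a = b := by
    intro a b h
    have h1 : ∀ α : N, ρ α * (a * b⁻¹) = (a * b⁻¹) * ρ α := by
      intro α
      have := congrArg (fun x => a * x * b⁻¹) (h α)
      simpa [mul_assoc] using this
    exact mul_inv_eq_one.mp (key _ h1)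
  have hmul : ∀ β₁ β₂ : Q, g (β₁ * β₂) = g β₁ * g β₂ := by
    intro β₁ β₂
    refine key2 _ _ fun α => ?_
    have h1 : φ (β₁ * β₂)⁻¹ α = φ β₂⁻¹ (φ β₁⁻¹ α) := by
      simp [mul_inv_rev, map_mul]
    calc (g (β₁ * β₂))⁻¹ * ρ α * g (β₁ * β₂) = ρ (φ (β₁ * β₂)⁻¹ α) := (hg α _).symm
      _ = ρ (φ β₂⁻¹ (φ β₁⁻¹ α)) := by rw [h1]
      _ = (g β₂)⁻¹ * ρ (φ β₁⁻¹ α) * g β₂ := hg _ _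
      _ = (g β₂)⁻¹ * ((g β₁)⁻¹ * ρ α * g β₁) * g β₂ := by rw [hg]
      _ = (g β₁ * g β₂)⁻¹ * ρ α * (g β₁ * g β₂) := by
          rw [mul_inv_rev]; group
  refine ⟨?_, hmul, ?_⟩
  · intro g' hg'
    funext β
    exact key2 _ _ fun α => (hg' α β).symm.trans (hg α β)
  · have hconj : ∀ q : Q, ∀ n : N, ρ (φ q n) = g q * ρ n * (g q)⁻¹ := by
      intro q n
      have := hg (φ q n) q
      rw [show φ q⁻¹ (φ q n) = n by simp [map_inv]] at this
      rw [this]; group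
    refine ⟨SemidirectProduct.lift ρ (MonoidHom.mk' g hmul) fun q => ?_, ?_, ?_, ?_⟩
    · ext n
      simpa using hconj q n
    · intro α; simp
    · intro β; simp
    · intro α β; simp
end

section
/- Let r : N ⋊ Q → PGL_m(k) be a group homomorphism over a field k, such that the image of the restriction r_N to N has trivial centralizer in PGL_m(k). Suppose r_N and the restriction r_Q both lift to GL_m(k), and some lift r̃_N of r_N satisfies: there exists a family (g_β)_{β∈Q} in GL_m(k) with r̃_N(β⁻¹αβ) = g_β⁻¹ r̃_N(α) g_β for all α ∈ N, β ∈ Q. Then r lifts to GL_m(k). -/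
open SemidirectProduct

/-- Let `r : N ⋊ Q → PGL_m(k)` with the image of `r|_N` of trivial
centralizer in `PGL_m(k)`.  If `r|_N` and `r|_Q` lift to `GL_m(k)` and some lift `r̃N`
of `r|_N` satisfies the intertwining condition with a family `(g β)` in `GL_m(k)`,
then `r` lifts to `GL_m(k)`.  Here `PGL_m(k) = GL_m(k)/k*` is the quotient of
`GL_m(k)` by its center (the scalars), with projection `P`. -/
theorem lift_to_GL_of_semidirect
    {N Q : Type*} [Group N] [Group Q] (φ : Q →* MulAut N)
    (k : Type*) [Field k] (m : ℕ)
    (P : Matrix.GeneralLinearGroup (Fin m) k →*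
        Matrix.GeneralLinearGroup (Fin m) k ⧸ Subgroup.center (Matrix.GeneralLinearGroup (Fin m) k))
    (hP : P = QuotientGroup.mk' (Subgroup.center (Matrix.GeneralLinearGroup (Fin m) k)))
    (r : N ⋊[φ] Q →*
        Matrix.GeneralLinearGroup (Fin m) k ⧸ Subgroup.center (Matrix.GeneralLinearGroup (Fin m) k))
    (hcent : Subgroup.centralizer (Set.range (r.comp (inl : N →* N ⋊[φ] Q))) = ⊥)
    (rN : N →* Matrix.GeneralLinearGroup (Fin m) k)
    (hrN : ∀ α : N, P (rN α) = r (inl α))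
    (hliftQ : ∃ rQ : Q →* Matrix.GeneralLinearGroup (Fin m) k, ∀ β : Q, P (rQ β) = r (inr β))
    (g : Q → Matrix.GeneralLinearGroup (Fin m) k)
    (hg : ∀ (α : N) (β : Q), rN (φ β⁻¹ α) = (g β)⁻¹ * rN α * g β) :
    ∃ rtilde : N ⋊[φ] Q →* Matrix.GeneralLinearGroup (Fin m) k,
      ∀ x : N ⋊[φ] Q, P (rtilde x) = r x := by
  obtain ⟨rQ, hrQ⟩ := hliftQ
  -- Step 1: P (g β) = P (rQ β)
  have key : ∀ β : Q, P (rQ β) = P (g β) := by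
    intro β
    have hmem : P (rQ β) * (P (g β))⁻¹ ∈
        Subgroup.centralizer (Set.range (r.comp (inl : N →* N ⋊[φ] Q))) := by
      rintro _ ⟨α, rfl⟩
      have hL : (P (rQ β))⁻¹ * P (rN α) * P (rQ β) = r (inl ((φ β)⁻¹ α)) :=
        calc (P (rQ β))⁻¹ * P (rN α) * P (rQ β)
            = r (inr β⁻¹ * inl α * inr β) := by
              rw [hrN, hrQ, map_mul, map_mul, map_inv, map_inv]
          _ = r (inl ((φ β)⁻¹ α)) := by rw [inl_aut_inv]
      have hR : (P (g β))⁻¹ * P (rN α) * P (g β) = r (inl ((φ β)⁻¹ α)) := by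
        rw [← map_inv, ← map_mul, ← map_mul]
        have h0 := hg α β
        rw [map_inv] at h0
        rw [← h0, hrN]
      have h1 : (P (rQ β))⁻¹ * P (rN α) * P (rQ β)
          = (P (g β))⁻¹ * P (rN α) * P (g β) := hL.trans hR.symm
      have h2 := congrArg (fun x => P (rQ β) * x * (P (g β))⁻¹) h1
      simp only [MonoidHom.comp_apply, ← hrN]
      simp only [mul_assoc, mul_inv_cancel_left, mul_inv_cancel, mul_one,
        inv_mul_cancel_left] at h2 ⊢
      exact h2
    rw [hcent, Subgroup.mem_bot, mul_inv_eq_one] at hmem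
    exact hmem
  -- Step 2: rQ satisfies the intertwining condition
  have hconj : ∀ (β : Q) (α : N), rN (φ β α) = rQ β * rN α * (rQ β)⁻¹ := by
    intro β α
    obtain ⟨z, hz, hzg⟩ : ∃ z ∈ Subgroup.center _, rQ β * z = g β := by
      have h := key β
      rw [hP] at h
      exact (QuotientGroup.mk'_eq_mk' _).1 h
    have hzc : ∀ x, x * z = z * x := Subgroup.mem_center_iff.mp hz
    have hconjz : MulAut.conj (g β) = MulAut.conj (rQ β) := by
      rw [← hzg, map_mul]
      have hz1 : MulAut.conj z = 1 := by
        ext x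
        simp only [MulAut.conj_apply, MulAut.one_apply]
        rw [← hzc x, mul_assoc, mul_inv_cancel, mul_one]
      rw [hz1, mul_one]
    have h0 := hg (φ β α) β
    rw [map_inv] at h0
    rw [MulAut.inv_apply_self] at h0
    have hgb : g β * rN α * (g β)⁻¹ = rN (φ β α) := by rw [h0]; group
    have : MulAut.conj (g β) (rN α) = MulAut.conj (rQ β) (rN α) := by rw [hconjz]
    simp only [MulAut.conj_apply] at this
    rw [← hgb, this]
  -- Step 3: build the lift
  refine ⟨SemidirectProduct.lift rN rQ (fun β => MonoidHom.ext fun α => ?_), fun x => ?_⟩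
  · simp only [MonoidHom.comp_apply, MulEquiv.coe_toMonoidHom, MulAut.conj_apply]
    exact hconj β α
  · rcases x with ⟨α, β⟩
    show P (rN α * rQ β) = r ⟨α, β⟩
    rw [map_mul, hrN, hrQ, ← map_mul, ← mk_eq_inl_mul_inr]
end

section
/- Under the hypotheses of the previous lifting lemma, if moreover r_N and r_Q both lift to SL_m(k), then r : N ⋊ Q → PGL_m(k) lifts to SL_m(k). -/
open SemidirectProduct

private lemma toGL_inj {m : ℕ} {k : Type*} [Field k] :
    Function.Injective (Matrix.SpecialLinearGroup.toGL :
      Matrix.SpecialLinearGroup (Fin m) k →* Matrix.GeneralLinearGroup (Fin m) k) :=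
  fun _ _ h => Subtype.ext (congrArg Units.val h)

/-- Under the hypotheses of the lifting lemma (the image of `r|_N` has
trivial centralizer in `PGL_m(k)`, a lift `r̃N` of `r|_N` valued in `SL_m(k)` satisfies the
intertwining condition with a family `(g β)` in `GL_m(k)`), if moreover `r|_N` and `r|_Q`
lift to `SL_m(k)`, then `r` lifts to `SL_m(k)`. -/
theorem lift_to_SL_of_semidirect
    {N Q : Type*} [Group N] [Group Q] (φ : Q →* MulAut N)
    (k : Type*) [Field k] (m : ℕ)
    (P : Matrix.GeneralLinearGroup (Fin m) k →*
        Matrix.GeneralLinearGroup (Fin m) k ⧸ Subgroup.center (Matrix.GeneralLinearGroup (Fin m) k))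
    (hP : P = QuotientGroup.mk' (Subgroup.center (Matrix.GeneralLinearGroup (Fin m) k)))
    (r : N ⋊[φ] Q →*
        Matrix.GeneralLinearGroup (Fin m) k ⧸ Subgroup.center (Matrix.GeneralLinearGroup (Fin m) k))
    (hcent : Subgroup.centralizer (Set.range (r.comp (inl : N →* N ⋊[φ] Q))) = ⊥)
    (rN : N →* Matrix.SpecialLinearGroup (Fin m) k)
    (hrN : ∀ α : N, P (Matrix.SpecialLinearGroup.toGL (rN α)) = r (inl α))
    (hliftQ : ∃ rQ : Q →* Matrix.SpecialLinearGroup (Fin m) k,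
      ∀ β : Q, P (Matrix.SpecialLinearGroup.toGL (rQ β)) = r (inr β))
    (g : Q → Matrix.GeneralLinearGroup (Fin m) k)
    (hg : ∀ (α : N) (β : Q),
      Matrix.SpecialLinearGroup.toGL (rN (φ β⁻¹ α)) =
        (g β)⁻¹ * Matrix.SpecialLinearGroup.toGL (rN α) * g β) :
    ∃ rtilde : N ⋊[φ] Q →* Matrix.SpecialLinearGroup (Fin m) k,
      ∀ x : N ⋊[φ] Q, P (Matrix.SpecialLinearGroup.toGL (rtilde x)) = r x := by
  obtain ⟨rQ, hrQ⟩ := hliftQ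
  -- Step 1: P (g β) = r (inr β)
  have hgP : ∀ β : Q, P (g β) = r (inr β) := by
    intro β
    have hx : P (g β) * (r (inr β))⁻¹ ∈
        Subgroup.centralizer (Set.range (r.comp (inl : N →* N ⋊[φ] Q))) := by
      rw [Subgroup.mem_centralizer_iff]
      rintro _ ⟨α, rfl⟩
      have h1 : r (inl (φ β⁻¹ α)) = (P (g β))⁻¹ * r (inl α) * P (g β) := by
        rw [← hrN, hg α β, map_mul, map_mul, map_inv, hrN]
      have h2 : r (inl (φ β⁻¹ α)) = (r (inr β))⁻¹ * r (inl α) * r (inr β) := by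
        have hsem : (inl (φ β⁻¹ α) : N ⋊[φ] Q) = (inr β)⁻¹ * inl α * inr β := by
          rw [map_inv φ, inl_aut_inv, map_inv inr]
        rw [hsem, map_mul, map_mul, map_inv]
      have h3 := h2.symm.trans h1
      have h4 := congrArg (fun x => P (g β) * x * (r (inr β))⁻¹) h3
      simp only [MonoidHom.comp_apply, mul_assoc, mul_inv_cancel, mul_one,
        inv_mul_cancel_left, mul_inv_cancel_left] at h4 ⊢
      exact h4.symm
    rw [hcent, Subgroup.mem_bot, mul_inv_eq_one] at hx
    exact hx
  -- Step 2: intertwining holds with rQ β in place of g β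
  have key : ∀ (α : N) (β : Q),
      Matrix.SpecialLinearGroup.toGL (rN (φ β⁻¹ α)) =
        (Matrix.SpecialLinearGroup.toGL (rQ β))⁻¹ *
          Matrix.SpecialLinearGroup.toGL (rN α) * Matrix.SpecialLinearGroup.toGL (rQ β) := by
    intro α β
    obtain ⟨z, hzc, hgz⟩ : ∃ z : Matrix.GeneralLinearGroup (Fin m) k,
        (∀ x, x * z = z * x) ∧ g β = Matrix.SpecialLinearGroup.toGL (rQ β) * z := by
      refine ⟨(Matrix.SpecialLinearGroup.toGL (rQ β))⁻¹ * g β, ?_, (mul_inv_cancel_left _ _).symm⟩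
      refine Subgroup.mem_center_iff.mp ?_
      have h1 : P ((Matrix.SpecialLinearGroup.toGL (rQ β))⁻¹ * g β) = 1 := by
        rw [map_mul, map_inv, hgP β, hrQ β, inv_mul_cancel]
      rw [hP] at h1
      exact (QuotientGroup.eq_one_iff _).mp h1
    rw [hg α β, hgz, mul_inv_rev]
    have h5 : z⁻¹ * ((Matrix.SpecialLinearGroup.toGL (rQ β))⁻¹ *
        Matrix.SpecialLinearGroup.toGL (rN α) * Matrix.SpecialLinearGroup.toGL (rQ β)) * z =
        (Matrix.SpecialLinearGroup.toGL (rQ β))⁻¹ *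
          Matrix.SpecialLinearGroup.toGL (rN α) * Matrix.SpecialLinearGroup.toGL (rQ β) := by
      rw [mul_assoc, hzc, inv_mul_cancel_left]
    rw [← h5]
    simp only [mul_assoc]
  -- Step 3: conjugation identity at SL level
  have hcond : ∀ q : Q, rN.comp (φ q).toMonoidHom =
      (MulAut.conj (rQ q)).toMonoidHom.comp rN := by
    intro q
    refine MonoidHom.ext fun α => toGL_inj ?_
    have h6 := key α q⁻¹
    simp only [inv_inv, map_inv] at h6
    simp only [MonoidHom.comp_apply, MulEquiv.coe_toMonoidHom, MulAut.conj_apply, h6,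
      map_mul, map_inv]
  refine ⟨SemidirectProduct.lift rN rQ hcond, fun x => ?_⟩
  rw [← inl_left_mul_inr_right x, map_mul, lift_inl, lift_inr, map_mul, map_mul,
    hrN, hrQ, ← map_mul]
end

section
/- Let ρ = ⊕_{i∈I} ρ_i be a finite direct sum of irreducible representations ρ_i : Γ → GL(W_i) over a field k, where k^m = ⊕_i W_i. Suppose a group B acts on Hom(Γ, GL_m(k)) by precomposition with automorphisms of Γ, and let Stab[ρ] denote the stabilizer of the GL_m(k)-conjugacy class of ρ. Then the intersection ∩_i Stab[ρ_i] is a finite index subgroup of Stab[ρ]. -/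
/-!
Isomorphisms `ρᵢ ≅ (β·ρ)ᵢ` glue along `k^m = ⊕ᵢ Wᵢ` to an isomorphism `ρ ≅ β·ρ`. Conversely, if
`C` intertwines `ρ` with `β·ρ` and `Wᵢ ≠ 0`, Schur's lemma makes some component `Wᵢ → Wⱼ` of `C`
an isomorphism `ρᵢ ≅ (β·ρ)ⱼ`. So the relation `R_β = {(i, j) | ρᵢ ≅ (β·ρ)ⱼ}`, which can take only
finitely many values, relates every `i` to some `j` when `β ∈ Stab[ρ]`. If moreover `R_β = R_τ`,
twisting `ρᵢ ≅ (τ·ρ)ⱼ` by `τ⁻¹β` gives `(τ⁻¹β·ρ)ᵢ ≅ (β·ρ)ⱼ ≅ ρᵢ`, so `τ⁻¹β ∈ ⋂ᵢ Stab[ρᵢ]`.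
-/

namespace Submodule

variable {R V Γ Δ : Type*} [Ring R] [AddCommGroup V] [Module R V]

def IsInvariant (U : Submodule R V) (ρ : Γ → V ≃ₗ[R] V) : Prop :=
  ∀ γ, ∀ x ∈ U, ρ γ x ∈ U

def IsIrreducible (W : Submodule R V) (ρ : Γ → V ≃ₗ[R] V) : Prop :=
  ∀ U ≤ W, U.IsInvariant ρ → U = ⊥ ∨ U = W

def IntertwinesOn (W : Submodule R V) (f : V → V) (ρ σ : Γ → V ≃ₗ[R] V) : Prop :=
  ∀ γ, ∀ x ∈ W, σ γ (f x) = f (ρ γ x)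

variable {U W W' : Submodule R V} {ρ σ : Γ → V ≃ₗ[R] V} {φ : Δ → Γ}

theorem isInvariant_comp_iff (hφ : φ.Surjective) : U.IsInvariant (ρ ∘ φ) ↔ U.IsInvariant ρ :=
  ⟨fun h γ => by obtain ⟨δ, rfl⟩ := hφ γ; exact h δ, fun h δ => h (φ δ)⟩

theorem IsIrreducible.comp (hW : W.IsIrreducible ρ) (hφ : φ.Surjective) :
    W.IsIrreducible (ρ ∘ φ) :=
  fun U hU hinv => hW U hU ((isInvariant_comp_iff hφ).1 hinv)

theorem IsIrreducible.injOn_of_intertwinesOn (hirr : W.IsIrreducible ρ) (hinv : W.IsInvariant ρ)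
    {f : V →ₗ[R] V} (hf : W.IntertwinesOn f ρ σ) (hne : ∃ x ∈ W, f x ≠ 0) : Set.InjOn f W := by
  have hker : (W ⊓ LinearMap.ker f).IsInvariant ρ := fun γ x ⟨hxW, hxker⟩ =>
    ⟨hinv γ x hxW, show f (ρ γ x) = 0 by rw [← hf γ x hxW, show f x = 0 from hxker, map_zero]⟩
  refine LinearMap.injOn_of_disjoint_ker le_rfl (disjoint_iff.2 ?_)
  refine (hirr _ inf_le_left hker).resolve_right fun h => ?_
  obtain ⟨x, hxW, hx⟩ := hne
  exact hx (h.ge hxW).2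

theorem IsIrreducible.map_eq_of_intertwinesOn (hirr : W'.IsIrreducible σ)
    (hinv : W.IsInvariant ρ) {f : V →ₗ[R] V} (hf : W.IntertwinesOn f ρ σ) (hle : W.map f ≤ W')
    (hne : W.map f ≠ ⊥) : W.map f = W' := by
  refine (hirr _ hle ?_).resolve_left hne
  rintro γ _ ⟨x, hx, rfl⟩
  exact ⟨ρ γ x, hinv γ x hx, (hf γ x hx).symm⟩

end Submodule

open Submodule

section SubrepIsomorphic

variable {R V Γ Δ : Type*} [Ring R] [AddCommGroup V] [Module R V]
  {W W' W'' : Submodule R V} {ρ σ τ : Γ → V ≃ₗ[R] V}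

/-- `(W, ρ) ≅ (W', σ)`, witnessed by an automorphism of the ambient module carrying `W` onto
`W'`. -/
def SubrepIsomorphic (ρ : Γ → V ≃ₗ[R] V) (W : Submodule R V) (σ : Γ → V ≃ₗ[R] V)
    (W' : Submodule R V) : Prop :=
  ∃ T : V ≃ₗ[R] V, W.map (T : V →ₗ[R] V) = W' ∧ W.IntertwinesOn T ρ σ

theorem subrepIsomorphic_bot : SubrepIsomorphic ρ ⊥ σ ⊥ :=
  ⟨LinearEquiv.refl R V, map_bot _, fun γ x hx => by simp [(mem_bot R).1 hx]⟩

theorem SubrepIsomorphic.symm (h : SubrepIsomorphic ρ W σ W') : SubrepIsomorphic σ W' ρ W := by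
  obtain ⟨T, hTW, hT⟩ := h
  refine ⟨T.symm, (map_symm_eq_iff T).2 hTW, fun γ y hy => ?_⟩
  obtain ⟨x, hx, rfl⟩ := hTW ▸ hy
  rw [LinearEquiv.coe_coe, hT γ x hx, LinearEquiv.symm_apply_apply, LinearEquiv.symm_apply_apply]

theorem SubrepIsomorphic.trans (h : SubrepIsomorphic ρ W σ W')
    (h' : SubrepIsomorphic σ W' τ W'') : SubrepIsomorphic ρ W τ W'' := by
  obtain ⟨T, hTW, hT⟩ := h
  obtain ⟨T', hT'W, hT'⟩ := h'
  refine ⟨T.trans T', by rw [LinearEquiv.coe_trans, map_comp, hTW, hT'W], fun γ x hx => ?_⟩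
  have hTx : T x ∈ W' := hTW ▸ mem_map_of_mem hx
  simp only [LinearEquiv.trans_apply, hT' γ (T x) hTx, hT γ x hx]

theorem SubrepIsomorphic.comp (h : SubrepIsomorphic ρ W σ W') (φ : Δ → Γ) :
    SubrepIsomorphic (ρ ∘ φ) W (σ ∘ φ) W' := by
  obtain ⟨T, hTW, hT⟩ := h
  exact ⟨T, hTW, fun δ => hT (φ δ)⟩

theorem SubrepIsomorphic.twist_inv_mul [Mul Γ] {B : Type*} [Group B] (a : B →* MulAut Γ)
    {ρ : Γ → V ≃ₗ[R] V} {β τ : B} (hβ : SubrepIsomorphic ρ W (ρ ∘ a β) W')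
    (hτ : SubrepIsomorphic ρ W (ρ ∘ a τ) W') : SubrepIsomorphic ρ W (ρ ∘ a (τ⁻¹ * β)) W := by
  have hcomp : (ρ ∘ a τ) ∘ a (τ⁻¹ * β) = ρ ∘ a β := by
    funext γ
    simp
  exact hβ.trans (hcomp ▸ hτ.comp (a (τ⁻¹ * β))).symm

end SubrepIsomorphic

section FiniteDimensional

variable {K V Γ : Type*} [DivisionRing K] [AddCommGroup V] [Module K V] [FiniteDimensional K V]
  {W W' : Submodule K V}

theorem Submodule.exists_linearEquiv_eqOn_of_injOn {f : V →ₗ[K] V} (hf : Set.InjOn f W) :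
    ∃ T : V ≃ₗ[K] V, Set.EqOn T f W := by
  let e := LinearEquiv.ofInjective (f.domRestrict W) fun x y h => Subtype.ext (hf x.2 y.2 h)
  have he : ∀ x : W, (e x : V) = f x := fun _ => rfl
  obtain ⟨p, hp⟩ := W.exists_isCompl
  obtain ⟨p', hp'⟩ := (LinearMap.range (f.domRestrict W)).exists_isCompl
  have hrank : Module.finrank K p = Module.finrank K p' := by
    have := finrank_add_eq_of_isCompl hp
    have := finrank_add_eq_of_isCompl hp'
    have := e.finrank_eq
    omega
  refine ⟨(W.prodEquivOfIsCompl p hp).symm.trans ((e.prodCongr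
    (LinearEquiv.ofFinrankEq p p' hrank)).trans (prodEquivOfIsCompl _ p' hp')), fun x hx => ?_⟩
  change prodEquivOfIsCompl _ p' hp' (e.prodCongr _ ((W.prodEquivOfIsCompl p hp).symm
    (⟨x, hx⟩ : W))) = f x
  rw [prodEquivOfIsCompl_symm_apply_left]
  simp [he]

theorem Submodule.map_linearEquiv_eq_of_mapsTo (T : V ≃ₗ[K] V) (h : ∀ x ∈ W, T x ∈ W) :
    W.map (T : V →ₗ[K] V) = W :=
  eq_of_le_of_finrank_eq (map_le_iff_le_comap.2 h) (LinearEquiv.finrank_map_eq T W)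

theorem SubrepIsomorphic.of_injOn {ρ σ : Γ → V ≃ₗ[K] V} (hinv : W.IsInvariant ρ)
    {f : V →ₗ[K] V} (hinj : Set.InjOn f W) (hmap : W.map f = W') (hf : W.IntertwinesOn f ρ σ) :
    SubrepIsomorphic ρ W σ W' := by
  obtain ⟨T, hT⟩ := exists_linearEquiv_eqOn_of_injOn hinj
  refine ⟨T, hmap ▸ SetLike.coe_injective ?_, fun γ x hx => ?_⟩
  · simpa only [map_coe, LinearEquiv.coe_coe] using hT.image_eq
  · rw [hT hx, hT (hinv γ x hx), hf γ x hx]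

end FiniteDimensional

namespace DirectSum.IsInternal

section Ring

variable {R V ι : Type*} [Ring R] [AddCommGroup V] [Module R V] [DecidableEq ι]
  {W : ι → Submodule R V}

noncomputable def proj (hW : IsInternal W) (j : ι) : Module.End R V :=
  (W j).subtype ∘ₗ component R ι (fun i => W i) j ∘ₗ
    (LinearEquiv.ofBijective (coeLinearMap W) hW).symm.toLinearMap

theorem linearMap_ext (hW : IsInternal W) {M : Type*} [AddCommGroup M] [Module R M]
    {f g : V →ₗ[R] M} (h : ∀ i, ∀ x ∈ W i, f x = g x) : f = g := by
  have hle : ⨆ i, W i ≤ LinearMap.eqLocus f g := iSup_le h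
  rw [hW.submodule_iSup_eq_top] at hle
  exact LinearMap.ext fun x => hle Submodule.mem_top

theorem exists_linearEquiv_eqOn (hW : IsInternal W) (C : ι → V ≃ₗ[R] V)
    (hC : ∀ i, (W i).map (C i : V →ₗ[R] V) = W i) :
    ∃ T : V ≃ₗ[R] V, ∀ i, Set.EqOn T (C i) (W i) := by
  let e := LinearEquiv.ofBijective (coeLinearMap W) hW
  let c i : W i ≃ₗ[R] W i := ((C i).submoduleMap (W i)).trans (LinearEquiv.ofEq _ _ (hC i))
  refine ⟨e.symm.trans ((DFinsupp.mapRange.linearEquiv c).trans e), fun i x hx => ?_⟩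
  have hex : e.symm x = DFinsupp.single i ⟨x, hx⟩ :=
    e.symm_apply_eq.2 (coeLinearMap_of W i ⟨x, hx⟩).symm
  change e (DFinsupp.mapRange.linearEquiv c (e.symm x)) = C i x
  rw [hex, DFinsupp.mapRange.linearEquiv_apply, DFinsupp.mapRange_single]
  exact coeLinearMap_of W i _

variable {hW : IsInternal W}

theorem proj_apply (j : ι) (x : V) :
    hW.proj j x = ((LinearEquiv.ofBijective (coeLinearMap W) hW).symm x j : V) :=
  rfl

theorem proj_mem (j : ι) (x : V) : hW.proj j x ∈ W j := SetLike.coe_mem _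

theorem proj_of_mem {j : ι} {x : V} (hx : x ∈ W j) : hW.proj j x = x := by
  rw [proj_apply, hW.ofBijective_coeLinearMap_of_mem hx]

theorem proj_of_mem_ne {i j : ι} {x : V} (hx : x ∈ W i) (hij : i ≠ j) : hW.proj j x = 0 := by
  rw [proj_apply, hW.ofBijective_coeLinearMap_of_mem_ne hij hx, ZeroMemClass.coe_zero]

theorem commute_proj (hW : IsInternal W) {g : Module.End R V} (hg : ∀ i, ∀ x ∈ W i, g x ∈ W i)
    (j : ι) : Commute (hW.proj j) g := by
  refine hW.linearMap_ext fun i x hx => ?_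
  obtain rfl | hij := eq_or_ne i j
  · simp [proj_of_mem hx, proj_of_mem (hg i x hx)]
  · simp [proj_of_mem_ne hx hij, proj_of_mem_ne (hg i x hx) hij]

theorem exists_proj_ne_zero (hW : IsInternal W) {x : V} (hx : x ≠ 0) :
    ∃ j, hW.proj j x ≠ 0 := by
  by_contra! h
  refine hx ((LinearEquiv.ofBijective (coeLinearMap W) hW).symm.map_eq_zero_iff.1 ?_)
  exact DFinsupp.ext fun j => Subtype.ext (h j)

variable {Γ : Type*} {ρ σ : Γ → V ≃ₗ[R] V}

theorem exists_intertwiner_of_forall_subrepIsomorphic (hW : IsInternal W)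
    (hinv : ∀ i, (W i).IsInvariant ρ) (h : ∀ i, SubrepIsomorphic ρ (W i) σ (W i)) :
    ∃ T : V ≃ₗ[R] V, ∀ γ x, σ γ (T x) = T (ρ γ x) := by
  choose C hCW hC using h
  obtain ⟨T, hT⟩ := hW.exists_linearEquiv_eqOn C hCW
  refine ⟨T, fun γ => LinearMap.congr_fun (hW.linearMap_ext
    (f := (σ γ).toLinearMap ∘ₗ T.toLinearMap) (g := T.toLinearMap ∘ₗ (ρ γ).toLinearMap)
    fun i x hx => ?_)⟩
  simp [hT i hx, hT i (hinv i γ x hx), hC i γ x hx]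

end Ring

section FiniteDimensional

variable {K V ι Γ : Type*} [DivisionRing K] [AddCommGroup V] [Module K V] [FiniteDimensional K V]
  [DecidableEq ι] {W : ι → Submodule K V}

theorem exists_subrepIsomorphic_of_intertwiner (hW : IsInternal W) {ρ σ : Γ → V ≃ₗ[K] V} {i : ι}
    (hinv : (W i).IsInvariant ρ) (hirr : (W i).IsIrreducible ρ)
    (hσinv : ∀ j, (W j).IsInvariant σ) (hσirr : ∀ j, (W j).IsIrreducible σ) {C : V ≃ₗ[K] V}
    (hC : ∀ γ x, σ γ (C x) = C (ρ γ x)) : ∃ j, SubrepIsomorphic ρ (W i) σ (W j) := by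
  by_cases hbot : W i = ⊥
  · exact ⟨i, hbot ▸ subrepIsomorphic_bot⟩
  obtain ⟨x₀, hx₀, hx₀ne⟩ := Submodule.exists_mem_ne_zero_of_ne_bot hbot
  obtain ⟨j, hj⟩ := hW.exists_proj_ne_zero (C.map_ne_zero_iff.2 hx₀ne)
  let f := hW.proj j ∘ₗ C.toLinearMap
  have hf : (W i).IntertwinesOn f ρ σ := fun γ x _ => by
    have hσ := (hW.commute_proj (g := (σ γ).toLinearMap) (fun l => hσinv l γ) j).eq
    change σ γ (hW.proj j (C x)) = hW.proj j (C (ρ γ x))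
    rw [← hC γ x]
    exact (LinearMap.congr_fun hσ (C x)).symm
  have hmap : (W i).map f = W j := (hσirr j).map_eq_of_intertwinesOn hinv hf
    (Submodule.map_le_iff_le_comap.2 fun x _ => proj_mem j (C x))
    ((Submodule.ne_bot_iff _).2 ⟨f x₀, Submodule.mem_map_of_mem hx₀, hj⟩)
  exact ⟨j, .of_injOn hinv (hirr.injOn_of_intertwinesOn hinv hf ⟨x₀, hx₀, hj⟩) hmap hf⟩

end FiniteDimensional

end DirectSum.IsInternal

theorem exists_finset_subset_biUnion_mul_image {B ι : Type*} [Group B] [Finite ι] {S H : Set B}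
    (f : B → ι) (h : ∀ β ∈ S, ∀ τ ∈ S, f β = f τ → τ⁻¹ * β ∈ H) :
    ∃ T : Finset B, S ⊆ ⋃ τ ∈ T, (fun β => τ * β) '' H := by
  have hrep : ∀ v ∈ f '' S, ∃ τ ∈ S, f τ = v := fun _ hv => hv
  choose! g hgS hgf using hrep
  refine ⟨(Set.finite_range g).toFinset, fun β hβ => ?_⟩
  have hv : f β ∈ f '' S := ⟨β, hβ, rfl⟩
  refine Set.mem_iUnion₂.2 ⟨g (f β), by simp, (g (f β))⁻¹ * β, ?_, mul_inv_cancel_left _ _⟩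
  exact h β hβ _ (hgS _ hv) (hgf _ hv).symm

theorem inter_stab_finite_index_in_stab_general
    (k : Type*) [Field k] (m : ℕ)
    {Γ B : Type*} [Group Γ] [Group B]
    (a : B →* MulAut Γ)
    {I : Type*} [Fintype I] [DecidableEq I]
    (W : I → Submodule k (Fin m → k))
    (hW : DirectSum.IsInternal W)
    (ρ : Γ →* ((Fin m → k) ≃ₗ[k] (Fin m → k)))
    (hinv : ∀ (i : I) (γ : Γ), ∀ x ∈ W i, ρ γ x ∈ W i)
    (hirr : ∀ (i : I) (U : Submodule k (Fin m → k)), U ≤ W i →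
      (∀ γ : Γ, ∀ x ∈ U, ρ γ x ∈ U) → U = ⊥ ∨ U = W i)
    -- the stabilizer of the conjugacy class of `ρ`:
    (stabFull : Set B)
    (hstabFull : stabFull = {β : B | ∃ C : (Fin m → k) ≃ₗ[k] (Fin m → k),
      ∀ (γ : Γ) (x : Fin m → k), ρ (a β γ) (C x) = C (ρ γ x)})
    -- the stabilizer of the conjugacy class of the subrepresentation `ρᵢ` on `W i`:
    (stabSub : I → Set B)
    (hstabSub : ∀ i : I, stabSub i = {β : B | ∃ C : (Fin m → k) ≃ₗ[k] (Fin m → k),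
      (∀ x ∈ W i, C x ∈ W i) ∧ ∀ γ : Γ, ∀ x ∈ W i, ρ (a β γ) (C x) = C (ρ γ x)}) :
    (⋂ i : I, stabSub i) ⊆ stabFull ∧
    ∃ T : Finset B, stabFull ⊆ ⋃ τ ∈ T, (fun β => τ * β) '' (⋂ i : I, stabSub i) := by
  subst hstabFull
  have hinvβ (β : B) (i : I) : (W i).IsInvariant (ρ ∘ a β) :=
    (isInvariant_comp_iff (a β).surjective).2 (hinv i)
  have hirrβ (β : B) (i : I) : (W i).IsIrreducible (ρ ∘ a β) :=
    IsIrreducible.comp (hirr i) (a β).surjective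
  have hmem_stabSub (i : I) (β : B) :
      β ∈ stabSub i ↔ SubrepIsomorphic ρ (W i) (ρ ∘ a β) (W i) := by
    rw [hstabSub]
    exact ⟨fun ⟨C, hCW, hC⟩ => ⟨C, map_linearEquiv_eq_of_mapsTo C hCW, hC⟩,
      fun ⟨C, hCW, hC⟩ => ⟨C, fun x hx => hCW ▸ mem_map_of_mem hx, hC⟩⟩
  refine ⟨fun β hβ => hW.exists_intertwiner_of_forall_subrepIsomorphic hinv
    fun i => (hmem_stabSub i β).1 (Set.mem_iInter.1 hβ i), ?_⟩
  refine exists_finset_subset_biUnion_mul_image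
    (fun β i j => SubrepIsomorphic ρ (W i) (ρ ∘ a β) (W j))
    fun β ⟨C, hC⟩ τ _ hβτ => Set.mem_iInter.2 fun i => (hmem_stabSub i _).2 ?_
  obtain ⟨j, hj⟩ := hW.exists_subrepIsomorphic_of_intertwiner (hinv i) (hirr i) (hinvβ β)
    (hirrβ β) hC
  exact hj.twist_inv_mul a (congrFun (congrFun hβτ i) j ▸ hj)

/-- Let `ρ` be a representation of `Γ` on `k^m` which is a finite direct
sum of irreducible subrepresentations on submodules `W i` (`k^m = ⊕ᵢ W i`).  A group `B`
acts on representations by precomposition with automorphisms `a β` of `Γ`, each of which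
sends every element of a generating set `S` of `Γ` to a conjugate of itself.  Then the
intersection of the stabilizers of the classes `[ρᵢ]` is contained in the stabilizer of
`[ρ]` and has finite index in it (the stabilizer of `[ρ]` is covered by finitely many
cosets of the intersection). -/
theorem inter_stab_finite_index_in_stab
    (k : Type*) [Field k] (m : ℕ)
    {Γ B : Type*} [Group Γ] [Group B]
    (a : B →* MulAut Γ)
    (S : Set Γ) (hSgen : Subgroup.closure S = ⊤)
    (hSconj : ∀ (β : B), ∀ s ∈ S, ∃ c : Γ, a β s = c * s * c⁻¹)
    {I : Type*} [Fintype I] [DecidableEq I]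
    (W : I → Submodule k (Fin m → k))
    (hW : DirectSum.IsInternal W)
    (ρ : Γ →* ((Fin m → k) ≃ₗ[k] (Fin m → k)))
    (hinv : ∀ (i : I) (γ : Γ), ∀ x ∈ W i, ρ γ x ∈ W i)
    (hirr : ∀ (i : I) (U : Submodule k (Fin m → k)), U ≤ W i →
      (∀ γ : Γ, ∀ x ∈ U, ρ γ x ∈ U) → U = ⊥ ∨ U = W i)
    -- the stabilizer of the conjugacy class of `ρ`:
    (stabFull : Set B)
    (hstabFull : stabFull = {β : B | ∃ C : (Fin m → k) ≃ₗ[k] (Fin m → k),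
      ∀ (γ : Γ) (x : Fin m → k), ρ (a β γ) (C x) = C (ρ γ x)})
    -- the stabilizer of the conjugacy class of the subrepresentation `ρᵢ` on `W i`:
    (stabSub : I → Set B)
    (hstabSub : ∀ i : I, stabSub i = {β : B | ∃ C : (Fin m → k) ≃ₗ[k] (Fin m → k),
      (∀ x ∈ W i, C x ∈ W i) ∧ ∀ γ : Γ, ∀ x ∈ W i, ρ (a β γ) (C x) = C (ρ γ x)}) :
    (⋂ i : I, stabSub i) ⊆ stabFull ∧
    ∃ T : Finset B, stabFull ⊆ ⋃ τ ∈ T, (fun β => τ * β) '' (⋂ i : I, stabSub i) :=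
  inter_stab_finite_index_in_stab_general k m a W hW ρ hinv hirr stabFull hstabFull stabSub hstabSub
end

section
/- Let ρ = ⊕_{i∈I} ρ_i be a direct sum of irreducible representations ρ_i : Γ → GL(W_i) with k^m = ⊕ W_i. If a group B acts on Hom(Γ,GL_m(k)) by precomposition with automorphisms sending each element of a fixed generating set of Γ to a conjugate of itself, then the conjugacy class [ρ] has finite orbit under B if and only if each conjugacy class [ρ_i] has finite orbit under B. -/
section aux
variable {k : Type*} [Field k] {M : Type*} [AddCommGroup M] [Module k M]
  {I : Type*} [Fintype I] [DecidableEq I] (W : I → Submodule k M) (hW : DirectSum.IsInternal W)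

noncomputable def prW (l : I) : M →ₗ[k] (W l) :=
  (DirectSum.component k I (fun i => (W i : Submodule k M)) l) ∘ₗ
    (LinearEquiv.ofBijective (DirectSum.coeLinearMap W) hW).symm.toLinearMap

lemma prW_same {j : I} {x : M} (hx : x ∈ W j) : prW W hW j x = ⟨x, hx⟩ :=
  hW.ofBijective_coeLinearMap_of_mem hx

lemma prW_ne {j l : I} (h : j ≠ l) {x : M} (hx : x ∈ W j) : prW W hW l x = 0 :=
  hW.ofBijective_coeLinearMap_of_mem_ne h hx

lemma sum_prW (v : M) : ∑ l, ((prW W hW l v : M)) = v := by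
  classical
  set e := LinearEquiv.ofBijective (DirectSum.coeLinearMap W) hW with he
  have h1 : v = e (e.symm v) := (e.apply_symm_apply v).symm
  conv_rhs => rw [h1, ← DirectSum.sum_univ_of (e.symm v)]
  rw [map_sum]
  refine Finset.sum_congr rfl fun l _ => ?_
  have : e (DirectSum.of (fun i => (W i : Submodule k M)) l ((e.symm v) l))
      = ((e.symm v) l : M) := DirectSum.coeLinearMap_of W l _
  rw [this]
  rfl

lemma prW_comm {f : M →ₗ[k] M} (hf : ∀ l, ∀ x ∈ W l, f x ∈ W l) (j : I) (v : M) :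
    (prW W hW j (f v) : M) = f (prW W hW j v) := by
  classical
  conv_lhs => rw [← sum_prW W hW v]
  rw [map_sum, map_sum, AddSubmonoidClass.coe_finset_sum]
  have : ∀ l, ((prW W hW j (f ((prW W hW l v : M))) : M))
      = if l = j then f ((prW W hW j v : M)) else 0 := by
    intro l
    have hm : f ((prW W hW l v : M)) ∈ W l := hf l _ (prW W hW l v).2
    by_cases h : l = j
    · subst h; rw [prW_same W hW hm]; simp
    · rw [prW_ne W hW h hm]; simp [h]
  rw [Finset.sum_congr rfl fun l _ => this l]
  simp

noncomputable def glueMap (D : ∀ l, (W l) →ₗ[k] (W l)) : M →ₗ[k] M :=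
  ∑ l, (W l).subtype ∘ₗ (D l) ∘ₗ prW W hW l

lemma glueMap_apply (D : ∀ l, (W l) →ₗ[k] (W l)) (v : M) :
    glueMap W hW D v = ∑ l, ((D l (prW W hW l v) : M)) := by
  simp [glueMap]

lemma prW_glueMap (D : ∀ l, (W l) →ₗ[k] (W l)) (j : I) (v : M) :
    prW W hW j (glueMap W hW D v) = D j (prW W hW j v) := by
  classical
  rw [glueMap_apply, map_sum]
  have : ∀ l, prW W hW j ((D l (prW W hW l v) : M))
      = if l = j then D j (prW W hW j v) else 0 := by
    intro l
    by_cases h : l = j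
    · subst h; rw [prW_same W hW (D l (prW W hW l v)).2]; simp
    · rw [prW_ne W hW (Ne.symm (fun e => h e.symm)) (D l (prW W hW l v)).2]; simp [h]
  rw [Finset.sum_congr rfl fun l _ => this l]
  simp

lemma glueMap_apply_mem (D : ∀ l, (W l) →ₗ[k] (W l)) {j : I} {x : M} (hx : x ∈ W j) :
    glueMap W hW D x = ((D j ⟨x, hx⟩ : W j) : M) := by
  classical
  rw [glueMap_apply]
  have : ∀ l, ((D l (prW W hW l x) : W l) : M)
      = if l = j then ((D j ⟨x, hx⟩ : W j) : M) else 0 := by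
    intro l
    by_cases h : l = j
    · subst h; rw [prW_same W hW hx]; simp
    · rw [prW_ne W hW (fun e => h e.symm) hx]; simp [h]
  rw [Finset.sum_congr rfl fun l _ => this l]
  simp

noncomputable def glue (D : ∀ l, (W l) ≃ₗ[k] (W l)) : M ≃ₗ[k] M :=
  LinearEquiv.ofLinear (glueMap W hW fun l => (D l).toLinearMap)
    (glueMap W hW fun l => (D l).symm.toLinearMap)
    (by
      ext v
      simp only [LinearMap.coe_comp, Function.comp_apply, LinearMap.id_coe, id_eq]
      rw [glueMap_apply]
      have : ∀ l, (((D l).toLinearMap (prW W hW l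
          (glueMap W hW (fun l => (D l).symm.toLinearMap) v)) : M))
          = ((prW W hW l v : M)) := by
        intro l
        rw [prW_glueMap]
        simp
      rw [Finset.sum_congr rfl fun l _ => this l, sum_prW])
    (by
      ext v
      simp only [LinearMap.coe_comp, Function.comp_apply, LinearMap.id_coe, id_eq]
      rw [glueMap_apply]
      have : ∀ l, ((((D l).symm.toLinearMap (prW W hW l
          (glueMap W hW (fun l => (D l).toLinearMap) v)) : M)))
          = ((prW W hW l v : M)) := by
        intro l
        rw [prW_glueMap]
        simp
      rw [Finset.sum_congr rfl fun l _ => this l, sum_prW])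

lemma glue_apply_mem (D : ∀ l, (W l) ≃ₗ[k] (W l)) {j : I} {x : M} (hx : x ∈ W j) :
    glue W hW D x = ((D j ⟨x, hx⟩ : W j) : M) :=
  glueMap_apply_mem W hW _ hx

lemma glue_mem (D : ∀ l, (W l) ≃ₗ[k] (W l)) {j : I} {x : M} (hx : x ∈ W j) :
    glue W hW D x ∈ W j := by
  rw [glue_apply_mem W hW D hx]; exact (D j ⟨x, hx⟩).2

end aux

section aux2
variable {k : Type*} [Field k] {M : Type*} [AddCommGroup M] [Module k M]

/-- Restrict a linear automorphism to an invariant finite-dimensional submodule. -/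
noncomputable def resEquiv {U : Submodule k M} [FiniteDimensional k U] (E : M ≃ₗ[k] M)
    (h : ∀ x ∈ U, E x ∈ U) : U ≃ₗ[k] U :=
  LinearEquiv.ofInjectiveEndo (E.toLinearMap.restrict h)
    (fun x y hxy => Subtype.ext (E.injective (Subtype.ext_iff.1 hxy)))

lemma resEquiv_apply_coe {U : Submodule k M} [FiniteDimensional k U] (E : M ≃ₗ[k] M)
    (h : ∀ x ∈ U, E x ∈ U) (x : U) : ((resEquiv E h x : U) : M) = E x := rfl

/-- A linear map which is injective on a submodule `U` and maps it onto `Uj` induces an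
equivalence `U ≃ Uj`. -/
noncomputable def resEquiv2 {U Uj : Submodule k M} (g : M →ₗ[k] M)
    (hinto : ∀ x ∈ U, g x ∈ Uj) (hinj : Set.InjOn g U) (hsurj : Submodule.map g U = Uj) :
    U ≃ₗ[k] Uj :=
  LinearEquiv.ofBijective (g.restrict hinto)
    ⟨fun x y hxy => Subtype.ext (hinj x.2 y.2 (Subtype.ext_iff.1 hxy)),
     fun y => by
      obtain ⟨x, hx, hgx⟩ := (show (y : M) ∈ Submodule.map g U from hsurj ▸ y.2)
      exact ⟨⟨x, hx⟩, Subtype.ext hgx⟩⟩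

lemma resEquiv2_apply_coe {U Uj : Submodule k M} (g : M →ₗ[k] M)
    (hinto : ∀ x ∈ U, g x ∈ Uj) (hinj : Set.InjOn g U) (hsurj : Submodule.map g U = Uj)
    (x : U) : ((resEquiv2 g hinto hinj hsurj x : Uj) : M) = g x := rfl

end aux2

/-- With `ρ = ⊕ᵢ ρᵢ` a direct sum of irreducible representations on
submodules `W i` with `k^m = ⊕ W i`, and a group `B` acting on representations by
precomposition with automorphisms sending each element of a fixed generating set of `Γ`
to a conjugate of itself, the conjugacy class `[ρ]` has finite orbit under `B` if and
only if every class `[ρᵢ]` has finite orbit under `B`.  (Finite orbit: finitely many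
`τ ∈ B` represent all the classes `[β·ρ]`, `β ∈ B`, up to conjugation.) -/
theorem finite_orbit_iff_finite_orbit_factors
    (k : Type*) [Field k] (m : ℕ)
    {Γ B : Type*} [Group Γ] [Group B]
    (a : B →* MulAut Γ)
    (S : Set Γ) (hSgen : Subgroup.closure S = ⊤)
    (hSconj : ∀ (β : B), ∀ s ∈ S, ∃ c : Γ, a β s = c * s * c⁻¹)
    {I : Type*} [Fintype I] [DecidableEq I]
    (W : I → Submodule k (Fin m → k))
    (hW : DirectSum.IsInternal W)
    (ρ : Γ →* ((Fin m → k) ≃ₗ[k] (Fin m → k)))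
    (hinv : ∀ (i : I) (γ : Γ), ∀ x ∈ W i, ρ γ x ∈ W i)
    (hirr : ∀ (i : I) (U : Submodule k (Fin m → k)), U ≤ W i →
      (∀ γ : Γ, ∀ x ∈ U, ρ γ x ∈ U) → U = ⊥ ∨ U = W i) :
    ((∃ T : Finset B, ∀ β : B, ∃ τ ∈ T, ∃ C : (Fin m → k) ≃ₗ[k] (Fin m → k),
        ∀ (γ : Γ) (x : Fin m → k), ρ (a β γ) (C x) = C (ρ (a τ γ) x))
      ↔ ∀ i : I, ∃ T : Finset B, ∀ β : B, ∃ τ ∈ T,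
          ∃ C : (Fin m → k) ≃ₗ[k] (Fin m → k),
            (∀ x ∈ W i, C x ∈ W i) ∧
            ∀ γ : Γ, ∀ x ∈ W i, ρ (a β γ) (C x) = C (ρ (a τ γ) x)) := by
  classical
  constructor
  · -- forward direction
    rintro ⟨T, hT⟩ i
    by_cases hbot : W i = ⊥
    · refine ⟨{1}, fun β => ⟨1, Finset.mem_singleton_self 1, LinearEquiv.refl k _,
        fun x hx => hx, fun γ x hx => ?_⟩⟩
      have hx0 : x = 0 := by simpa [hbot] using hx
      simp [hx0]
    · obtain ⟨x₀, hx₀mem, hx₀⟩ := (Submodule.ne_bot_iff _).1 hbot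
      -- the matching predicate
      set Q : B → I → B → Prop := fun τ j β => ∃ g : (Fin m → k) →ₗ[k] (Fin m → k),
        (∀ x, g x ∈ W j) ∧ Set.InjOn g (W i) ∧ Submodule.map g (W i) = W j ∧
        (∀ (γ : Γ) (x : Fin m → k), g (ρ (a β γ) x) = ρ (a τ γ) (g x)) with hQdef
      have hQ : ∀ β : B, ∃ τ ∈ T, ∃ j : I, Q τ j β := by
        intro β
        obtain ⟨τ, hτ, C, hC⟩ := hT β
        have hCinv : ∀ (γ : Γ) (y : Fin m → k),
            C.symm (ρ (a β γ) y) = ρ (a τ γ) (C.symm y) := by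
          intro γ y
          apply C.injective
          rw [C.apply_symm_apply, ← hC, C.apply_symm_apply]
        have hC0 : C.symm x₀ ≠ 0 := by
          intro h
          apply hx₀
          have := congrArg C h
          rwa [C.apply_symm_apply, map_zero] at this
        obtain ⟨j, hj⟩ : ∃ j : I, ((prW W hW j (C.symm x₀) : Fin m → k)) ≠ 0 := by
          by_contra h
          push_neg at h
          apply hC0
          rw [← sum_prW W hW (C.symm x₀)]
          exact Finset.sum_eq_zero fun l _ => h l
        set g : (Fin m → k) →ₗ[k] (Fin m → k) :=
          (W j).subtype ∘ₗ (prW W hW j) ∘ₗ (C.symm : (Fin m → k) →ₗ[k] (Fin m → k)) with hgdef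
        have hg_apply : ∀ x, g x = ((prW W hW j (C.symm x) : Fin m → k)) := fun x => rfl
        have hg_into : ∀ x, g x ∈ W j := fun x => (prW W hW j (C.symm x)).2
        have hgint : ∀ (γ : Γ) (x : Fin m → k), g (ρ (a β γ) x) = ρ (a τ γ) (g x) := by
          intro γ x
          rw [hg_apply, hg_apply, hCinv]
          exact prW_comm W hW (fun l y hy => hinv l (a τ γ) y hy) j (C.symm x)
        have hgx₀ : g x₀ ≠ 0 := by rw [hg_apply]; exact hj
        have hKinv : ∀ γ' : Γ, ∀ x ∈ W i ⊓ LinearMap.ker g,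
            ρ γ' x ∈ W i ⊓ LinearMap.ker g := by
          intro γ' x hx
          obtain ⟨hx1, hx2⟩ := Submodule.mem_inf.1 hx
          refine Submodule.mem_inf.2 ⟨hinv i γ' x hx1, ?_⟩
          rw [LinearMap.mem_ker] at hx2 ⊢
          have hγ' : γ' = a β ((a β).symm γ') := ((a β).apply_symm_apply γ').symm
          rw [hγ', hgint, hx2, map_zero]
        have hKbot : W i ⊓ LinearMap.ker g = ⊥ := by
          rcases hirr i _ inf_le_left hKinv with h | h
          · exact h
          · exfalso
            have hx₀K : x₀ ∈ W i ⊓ LinearMap.ker g := h.symm ▸ hx₀mem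
            exact hgx₀ (LinearMap.mem_ker.1 (Submodule.mem_inf.1 hx₀K).2)
        have hginj : Set.InjOn g (W i) := by
          intro x hx y hy hxy
          have hsub : x - y ∈ W i ⊓ LinearMap.ker g :=
            Submodule.mem_inf.2 ⟨sub_mem hx hy,
              LinearMap.mem_ker.2 (by rw [map_sub, hxy, sub_self])⟩
          rw [hKbot] at hsub
          exact sub_eq_zero.1 (Submodule.mem_bot k |>.1 hsub)
        have hIminv : ∀ γ' : Γ, ∀ z ∈ Submodule.map g (W i),
            ρ γ' z ∈ Submodule.map g (W i) := by
          rintro γ' z ⟨x, hx, rfl⟩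
          have hγ' : γ' = a τ ((a τ).symm γ') := ((a τ).apply_symm_apply γ').symm
          refine ⟨ρ (a β ((a τ).symm γ')) x, hinv i _ x hx, ?_⟩
          rw [hgint, ← hγ']
        have hIm : Submodule.map g (W i) = W j := by
          rcases hirr j _ (by rintro z ⟨x, hx, rfl⟩; exact hg_into x) hIminv with h | h
          · exfalso
            have : g x₀ ∈ (⊥ : Submodule k (Fin m → k)) :=
              h ▸ Submodule.mem_map_of_mem hx₀mem
            exact hgx₀ (Submodule.mem_bot k |>.1 this)
          · exact h
        exact ⟨τ, hτ, j, g, hg_into, hginj, hIm, hgint⟩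
      -- choose representatives
      have hrepex : ∀ p : B × I, ∃ β₀ : B, (∃ β, Q p.1 p.2 β) → Q p.1 p.2 β₀ := by
        intro p
        by_cases h : ∃ β, Q p.1 p.2 β
        · exact ⟨h.choose, fun _ => h.choose_spec⟩
        · exact ⟨1, fun h' => absurd h' h⟩
      choose rep hrep using hrepex
      refine ⟨(T ×ˢ Finset.univ).image rep, ?_⟩
      intro β
      obtain ⟨τ, hτ, j, hQβ⟩ := hQ β
      have hQβ₀ : Q τ j (rep (τ, j)) := hrep (τ, j) ⟨β, hQβ⟩
      refine ⟨rep (τ, j), Finset.mem_image_of_mem rep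
        (Finset.mem_product.2 ⟨hτ, Finset.mem_univ j⟩), ?_⟩
      obtain ⟨g, hg_into, hginj, hgmap, hgint⟩ := hQβ
      obtain ⟨g₀, hg₀_into, hg₀inj, hg₀map, hg₀int⟩ := hQβ₀
      set E : (W i) ≃ₗ[k] (W j) := resEquiv2 g (fun x _ => hg_into x) hginj hgmap with hE
      set E₀ : (W i) ≃ₗ[k] (W j) := resEquiv2 g₀ (fun x _ => hg₀_into x) hg₀inj hg₀map with hE₀
      set Dm : (W i) ≃ₗ[k] (W i) := E₀.trans E.symm with hDm
      set Dfam : ∀ l, (W l) ≃ₗ[k] (W l) :=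
        Function.update (fun l => LinearEquiv.refl k (W l)) i Dm with hDfam
      have hDfam_i : Dfam i = Dm := by
        rw [hDfam]; simp
      have hgDm : ∀ z : (W i), g ((Dm z : Fin m → k)) = g₀ (z : Fin m → k) := by
        intro z
        have h1 : E (E.symm (E₀ z)) = E₀ z := E.apply_symm_apply _
        exact congrArg (Subtype.val) h1
      refine ⟨glue W hW Dfam, fun x hx => glue_mem W hW Dfam hx, ?_⟩
      intro γ x hx
      have hx' : ρ (a (rep (τ, j)) γ) x ∈ W i := hinv i _ x hx
      rw [glue_apply_mem W hW Dfam hx, glue_apply_mem W hW Dfam hx']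
      have hmem1 : ρ (a β γ) ((Dfam i ⟨x, hx⟩ : Fin m → k)) ∈ W i :=
        hinv i _ _ (Dfam i ⟨x, hx⟩).2
      have hmem2 : ((Dfam i ⟨ρ (a (rep (τ, j)) γ) x, hx'⟩ : Fin m → k)) ∈ W i :=
        (Dfam i _).2
      apply hginj hmem1 hmem2
      rw [hgint γ]
      have e1 : g ((Dfam i ⟨x, hx⟩ : Fin m → k)) = g₀ x := by
        rw [hDfam_i]; exact hgDm ⟨x, hx⟩
      have e2 : g ((Dfam i ⟨ρ (a (rep (τ, j)) γ) x, hx'⟩ : Fin m → k))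
          = g₀ (ρ (a (rep (τ, j)) γ) x) := by
        rw [hDfam_i]; exact hgDm ⟨_, hx'⟩
      rw [e1, e2, hg₀int γ]
  · -- reverse direction
    intro h
    choose T hT using h
    choose τf hτmem Cf hCmem hCint using hT
    have hrepex : ∀ φ : I → B, ∃ β₀ : B,
        (∃ β, (fun l => τf l β) = φ) → (fun l => τf l β₀) = φ := by
      intro φ
      by_cases h : ∃ β, (fun l => τf l β) = φ
      · exact ⟨h.choose, fun _ => h.choose_spec⟩
      · exact ⟨1, fun h' => absurd h' h⟩
    choose rep hrep using hrepex
    refine ⟨(Fintype.piFinset T).image rep, ?_⟩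
    intro β
    have hmemΦ : (fun l => τf l β) ∈ Fintype.piFinset T :=
      Fintype.mem_piFinset.2 fun l => hτmem l β
    set τ : B := rep (fun l => τf l β) with hτdef
    have hgτ : (fun l => τf l τ) = (fun l => τf l β) := hrep _ ⟨β, rfl⟩
    have hgτ' : ∀ l, τf l τ = τf l β := fun l => congrFun hgτ l
    refine ⟨τ, Finset.mem_image_of_mem rep hmemΦ, ?_⟩
    set Dfam : ∀ l, (W l) ≃ₗ[k] (W l) := fun l =>
      ((resEquiv (Cf l τ) (hCmem l τ)).symm).trans (resEquiv (Cf l β) (hCmem l β)) with hDfam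
    refine ⟨glue W hW Dfam, ?_⟩
    have key : ∀ (γ : Γ) (l : I) (y : Fin m → k), y ∈ W l →
        ρ (a β γ) (glue W hW Dfam y) = glue W hW Dfam (ρ (a τ γ) y) := by
      intro γ l y hy
      have hy' : ρ (a τ γ) y ∈ W l := hinv l _ y hy
      rw [glue_apply_mem W hW Dfam hy, glue_apply_mem W hW Dfam hy']
      set z : (W l) := (resEquiv (Cf l τ) (hCmem l τ)).symm ⟨y, hy⟩ with hz
      have hzy : Cf l τ (z : Fin m → k) = y :=
        congrArg Subtype.val ((resEquiv (Cf l τ) (hCmem l τ)).apply_symm_apply ⟨y, hy⟩)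
      have hstep : (resEquiv (Cf l τ) (hCmem l τ)).symm ⟨ρ (a τ γ) y, hy'⟩
          = ⟨ρ (a (τf l β) γ) (z : Fin m → k), hinv l _ _ z.2⟩ := by
        rw [LinearEquiv.symm_apply_eq]
        apply Subtype.ext
        show (ρ (a τ γ)) y = Cf l τ (ρ (a (τf l β) γ) (z : Fin m → k))
        rw [← hgτ' l, ← hCint l τ γ (z : Fin m → k) z.2, hzy]
      have hfwd : ((Dfam l ⟨y, hy⟩ : Fin m → k)) = Cf l β (z : Fin m → k) := by
        simp only [hDfam, LinearEquiv.trans_apply, ← hz, resEquiv_apply_coe]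
      have hbwd : ((Dfam l ⟨ρ (a τ γ) y, hy'⟩ : Fin m → k))
          = Cf l β (ρ (a (τf l β) γ) (z : Fin m → k)) := by
        simp [hDfam, LinearEquiv.trans_apply, hstep, resEquiv_apply_coe]
      rw [hfwd, hbwd, hCint l β γ (z : Fin m → k) z.2]
    intro γ x
    conv_lhs => rw [← sum_prW W hW x]
    conv_rhs => rw [← sum_prW W hW x]
    simp only [map_sum]
    exact Finset.sum_congr rfl fun l _ => key γ l _ (prW W hW l x).2
end

section
/- Let Γ = N ⋊ Q and let k be an algebraically closed field, f a subfield of k. Let ρ : Γ → GL_m(k) be a homomorphism whose restriction ρ|_N is irreducible and such that (after conjugation) P∘ρ|_N takes values in the image G_f of GL_m(f) in PGL_m(k). If there exists a generating set S of N such that ρ(α) has nonzero trace for every α ∈ S, then P∘ρ takes values in G_f (up to the same conjugation); i.e. f is a field of definition for the projective representation Pρ. -/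
/-!
Let `B = ρ(q)` with `q ∈ Q`. For `α ∈ S`, both `ρ(α)` and `B ρ(α) B⁻¹ = ρ(q • α)` are scalar
multiples of matrices `M_α`, `M'_α` over `f`, so `B M_α B⁻¹ = ν_α M'_α`, and comparing traces
(`tr M_α ≠ 0`) shows `ν_α ∈ f`. Hence `B` is a nonzero solution of the linear system
`X M_α = ν_α M'_α X`, whose coefficients lie in `f`, so the system also has a nonzero solution `C`
over `f`. Then `B⁻¹ C` commutes with `ρ(S)`, hence with `ρ(N)`, and Schur's lemma gives
`C = μ B`: `Pρ(q) = P(C) ∈ G_f`. As `Γ = N Q`, this proves the claim.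
-/

open SemidirectProduct

section

open Matrix

variable {k : Type*} [Field k] {n : Type*} [Fintype n]

theorem Commute.units_val_map_of_mem_closure {G M : Type*} [Group G] [Monoid M] (ρ : G →* Mˣ)
    {D : M} {S : Set G} (hS : ∀ s ∈ S, Commute D (ρ s)) {g : G} (hg : g ∈ Subgroup.closure S) :
    Commute D (ρ g) := by
  induction hg using Subgroup.closure_induction with
  | mem s hs => exact hS s hs
  | one => simp
  | mul a b _ _ ha hb => simpa using ha.mul_right hb
  | inv a _ ha => simpa using ha.units_inv_right

theorem Commute.units_inv_mul_of_mul_eq_mul {M : Type*} [Monoid M] (B : Mˣ) {a a' c : M}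
    (hB : ↑B * a = a' * ↑B) (hc : c * a = a' * c) : Commute (↑B⁻¹ * c) a := by
  have hB' : ↑B⁻¹ * a' = a * ↑B⁻¹ := by
    rw [Units.inv_mul_eq_iff_eq_mul, ← mul_assoc, hB, mul_assoc, Units.mul_inv, mul_one]
  calc ↑B⁻¹ * c * a = ↑B⁻¹ * a' * c := by rw [mul_assoc, hc, mul_assoc]
    _ = a * (↑B⁻¹ * c) := by rw [hB', mul_assoc]

theorem Matrix.exists_ne_zero_mem_subfield_of_mul_eq_mul (f : Subfield k) {ι : Type*}
    {A A' : ι → Matrix n n k} (hA : ∀ i a b, A i a b ∈ f) (hA' : ∀ i a b, A' i a b ∈ f)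
    {X : Matrix n n k} (hX : X ≠ 0) (h : ∀ i, X * A i = A' i * X) :
    ∃ C : Matrix n n k, C ≠ 0 ∧ (∀ a b, C a b ∈ f) ∧ ∀ i, C * A i = A' i * C := by
  obtain ⟨a, b, hab⟩ : ∃ a b, X a b ≠ 0 := by
    contrapose! hX
    exact Matrix.ext hX
  -- Applying entrywise an `f`-linear form `φ : k → f` preserves the equations.
  obtain ⟨φ, hφ⟩ := Module.Projective.exists_dual_ne_zero f hab
  let Φ : Matrix n n k → Matrix n n k := fun Y => Y.map fun x => (φ x : k)
  have hφ_mul {c : k} (hc : c ∈ f) (x : k) : (φ (c * x) : k) = c * φ x := by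
    exact congrArg Subtype.val (φ.map_smul ⟨c, hc⟩ x)
  have hΦ_mul_right {M : Matrix n n k} (hM : ∀ a b, M a b ∈ f) (Y : Matrix n n k) :
      Φ (Y * M) = Φ Y * M := by
    ext a b
    simp only [Φ, map_apply, mul_apply, map_sum, AddSubmonoidClass.coe_finsetSum]
    exact Finset.sum_congr rfl fun l _ => by rw [mul_comm, hφ_mul (hM l b), mul_comm]
  have hΦ_mul_left {M : Matrix n n k} (hM : ∀ a b, M a b ∈ f) (Y : Matrix n n k) :
      Φ (M * Y) = M * Φ Y := by
    ext a b
    simp only [Φ, map_apply, mul_apply, map_sum, AddSubmonoidClass.coe_finsetSum]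
    exact Finset.sum_congr rfl fun l _ => hφ_mul (hM a l) _
  refine ⟨Φ X, fun h0 => hφ ?_, fun _ _ => (φ _).2, fun i => ?_⟩
  · simpa [Φ] using congrFun (congrFun h0 a) b
  · rw [← hΦ_mul_right (hA i), h, hΦ_mul_left (hA' i)]

variable [DecidableEq n]

theorem Matrix.exists_eq_smul_one_of_forall_commute [IsAlgClosed k] {ι : Type*}
    {A : ι → Matrix n n k}
    (hirr : ∀ U : Submodule k (n → k), (∀ i, ∀ x ∈ U, A i *ᵥ x ∈ U) → U = ⊥ ∨ U = ⊤)
    {D : Matrix n n k} (hD : ∀ i, Commute D (A i)) : ∃ μ : k, D = μ • 1 := by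
  cases isEmpty_or_nonempty n with
  | inl _ => exact ⟨0, Subsingleton.elim _ _⟩
  | inr _ =>
    obtain ⟨μ, hμ⟩ := Module.End.exists_eigenvalue (toLin' D)
    have hinv : ∀ i, ∀ x ∈ Module.End.eigenspace (toLin' D) μ,
        A i *ᵥ x ∈ Module.End.eigenspace (toLin' D) μ := by
      intro i x hx
      rw [Module.End.mem_eigenspace_iff, toLin'_apply] at hx ⊢
      rw [mulVec_mulVec, (hD i).eq, ← mulVec_mulVec, hx, mulVec_smul]
    refine ⟨μ, toLin'.injective (LinearMap.ext fun x => ?_)⟩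
    have hx : x ∈ Module.End.eigenspace (toLin' D) μ :=
      ((hirr _ hinv).resolve_left (Module.End.hasEigenvalue_iff.mp hμ)).symm ▸ Submodule.mem_top
    simpa using Module.End.mem_eigenspace_iff.mp hx

theorem Matrix.GeneralLinearGroup.mk_center_eq_mk_center_iff {R : Type*} [CommRing R]
    {A B : GL n R} :
    (QuotientGroup.mk' (Subgroup.center (GL n R)) A = QuotientGroup.mk' _ B) ↔
      ∃ u : Rˣ, B = A * scalar n u := by
  rw [QuotientGroup.mk'_eq_mk', center_eq_range_scalar]
  simp [eq_comm]

theorem Matrix.GeneralLinearGroup.val_mul_scalar {R : Type*} [CommRing R] (A : GL n R)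
    (u : Rˣ) : ((A * scalar n u : GL n R) : Matrix n n R) = (u : R) • (A : Matrix n n R) := by
  rw [Units.val_mul, coe_scalar, scalar_apply, ← smul_one_eq_diagonal, Matrix.mul_smul, mul_one]

/-- The image `G_f` of `GL_n(f)` in `PGL_n(k)`. -/
def Subfield.projGL (f : Subfield k) (n : Type*) [Fintype n] [DecidableEq n] :
    Set (GL n k ⧸ Subgroup.center (GL n k)) :=
  {x | ∃ M : GL n k, (∀ i j, (M : Matrix n n k) i j ∈ f) ∧ QuotientGroup.mk' _ M = x}

namespace Subfield

variable {f : Subfield k}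

theorem mul_mem_projGL {x y : GL n k ⧸ Subgroup.center (GL n k)} (hx : x ∈ f.projGL n)
    (hy : y ∈ f.projGL n) : x * y ∈ f.projGL n := by
  obtain ⟨M, hMf, rfl⟩ := hx
  obtain ⟨M', hM'f, rfl⟩ := hy
  refine ⟨M * M', fun i j => ?_, map_mul _ _ _⟩
  rw [Units.val_mul, mul_apply]
  exact f.sum_mem fun l _ => f.mul_mem (hMf i l) (hM'f l j)

theorem mk_mem_projGL_of_eq_smul {B : GL n k} {C : Matrix n n k} (hC : ∀ i j, C i j ∈ f)
    {μ : k} (hμ : μ ≠ 0) (hCB : C = μ • (B : Matrix n n k)) :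
    QuotientGroup.mk' _ B ∈ f.projGL n := by
  refine ⟨B * GeneralLinearGroup.scalar n (Units.mk0 μ hμ), fun i j => ?_,
    GeneralLinearGroup.mk_center_eq_mk_center_iff.mpr ⟨_, rfl⟩ |>.symm⟩
  rw [GeneralLinearGroup.val_mul_scalar, Units.val_mk0, ← hCB]
  exact hC i j

theorem exists_eq_smul_of_mk_mem_projGL {g : GL n k} (hg : QuotientGroup.mk' _ g ∈ f.projGL n) :
    ∃ (u : kˣ) (M : Matrix n n k), (∀ i j, M i j ∈ f) ∧ (g : Matrix n n k) = (u : k) • M := by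
  obtain ⟨M, hMf, hM⟩ := hg
  obtain ⟨u, rfl⟩ := GeneralLinearGroup.mk_center_eq_mk_center_iff.mp hM
  exact ⟨u, M, hMf, GeneralLinearGroup.val_mul_scalar M u⟩

theorem mem_of_conj_eq_smul (B : GL n k) {M M' : Matrix n n k} (hM : ∀ i j, M i j ∈ f)
    (hM' : ∀ i j, M' i j ∈ f) (htr : trace M ≠ 0) {ν : k}
    (h : (B : Matrix n n k) * M * (↑B⁻¹ : Matrix n n k) = ν • M') : ν ∈ f := by
  have htrace : trace M = ν * trace M' := by
    rw [← trace_units_conj B M, h, trace_smul, smul_eq_mul]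
  have htr' : trace M' ≠ 0 := fun h0 => htr (by rw [htrace, h0, mul_zero])
  rw [eq_div_of_mul_eq htr' htrace.symm]
  exact f.div_mem (f.sum_mem fun i _ => hM i i) (f.sum_mem fun i _ => hM' i i)

theorem exists_mul_eq_mul_of_mk_mem_projGL {g B : GL n k}
    (hg : QuotientGroup.mk' _ g ∈ f.projGL n)
    (hBg : QuotientGroup.mk' _ (B * g * B⁻¹) ∈ f.projGL n) (htr : trace (g : Matrix n n k) ≠ 0) :
    ∃ (c : k) (M M' : Matrix n n k), (∀ i j, M i j ∈ f) ∧ (∀ i j, M' i j ∈ f) ∧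
      (g : Matrix n n k) = c • M ∧ (B : Matrix n n k) * M = M' * B := by
  obtain ⟨u, M, hMf, hgM⟩ := exists_eq_smul_of_mk_mem_projGL hg
  obtain ⟨v, M₁, hM₁f, hBgM⟩ := exists_eq_smul_of_mk_mem_projGL hBg
  rw [Units.val_mul, Units.val_mul, hgM, Matrix.mul_smul, Matrix.smul_mul] at hBgM
  have hconj : (B : Matrix n n k) * M * (↑B⁻¹ : Matrix n n k) = ((u : k)⁻¹ * v) • M₁ := by
    rw [mul_smul, ← hBgM, smul_smul, inv_mul_cancel₀ u.ne_zero, one_smul]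
  have htrM : trace M ≠ 0 := fun h0 => htr (by rw [hgM, trace_smul, h0, smul_zero])
  have hν := mem_of_conj_eq_smul B hMf hM₁f htrM hconj
  refine ⟨u, M, ((u : k)⁻¹ * v) • M₁, hMf, fun i j => f.mul_mem hν (hM₁f i j), hgM, ?_⟩
  rw [← hconj, Matrix.mul_assoc, Units.inv_mul, Matrix.mul_one]

theorem mk_mem_projGL_of_forall_conj [IsAlgClosed k] {G : Type*} [Group G] (ρ : G →* GL n k)
    (hirr : ∀ U : Submodule k (n → k),
      (∀ g, ∀ x ∈ U, (ρ g : Matrix n n k) *ᵥ x ∈ U) → U = ⊥ ∨ U = ⊤)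
    {S : Set G} (hS : Subgroup.closure S = ⊤) (htr : ∀ s ∈ S, trace (ρ s : Matrix n n k) ≠ 0)
    (hval : ∀ s ∈ S, QuotientGroup.mk' _ (ρ s) ∈ f.projGL n) (B : GL n k)
    (hB : ∀ s ∈ S, QuotientGroup.mk' _ (B * ρ s * B⁻¹) ∈ f.projGL n) :
    QuotientGroup.mk' _ B ∈ f.projGL n := by
  cases isEmpty_or_nonempty n with
  | inl _ => exact ⟨B, fun i => isEmptyElim i, rfl⟩
  | inr _ =>
  choose c M M' hMf hM'f hρM hBM using fun s (hs : s ∈ S) =>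
    exists_mul_eq_mul_of_mk_mem_projGL (hval s hs) (hB s hs) (htr s hs)
  obtain ⟨C, hC0, hCf, hC⟩ := exists_ne_zero_mem_subfield_of_mul_eq_mul f
    (A := fun s : S => M s s.2) (A' := fun s : S => M' s s.2) (fun s => hMf s s.2)
    (fun s => hM'f s s.2) B.ne_zero (fun s => hBM s s.2)
  have hDS (s : G) (hs : s ∈ S) : Commute ((↑B⁻¹ : Matrix n n k) * C) (ρ s : Matrix n n k) := by
    rw [hρM s hs]
    exact (Commute.units_inv_mul_of_mul_eq_mul B (hBM s hs) (hC ⟨s, hs⟩)).smul_right _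
  obtain ⟨μ, hμ⟩ := exists_eq_smul_one_of_forall_commute hirr fun g =>
    Commute.units_val_map_of_mem_closure ρ hDS (hS ▸ Subgroup.mem_top g)
  have hCB : C = μ • (B : Matrix n n k) := by
    rw [(Units.inv_mul_eq_iff_eq_mul B).mp hμ, Matrix.mul_smul, Matrix.mul_one]
  exact mk_mem_projGL_of_eq_smul hCf (fun h0 => hC0 (by rw [hCB, h0, zero_smul])) hCB

end Subfield

end

/-- Let `Γ = N ⋊ Q`, `k` an algebraically closed field, `f` a subfield of
`k`, and `ρ : Γ → GL_m(k)` with `ρ|_N` irreducible and such that the projectivization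
`P∘ρ|_N` takes values in the image `G_f` of `GL_m(f)` in `PGL_m(k)` (here
`PGL_m(k) = GL_m(k)/center` with projection `P`).  If there is a generating set `S` of `N`
with `trace ρ(α) ≠ 0` for all `α ∈ S`, then `P∘ρ` takes values in `G_f`. -/
theorem field_of_definition_of_projective_extension
    {N Q : Type*} [Group N] [Group Q] (φ : Q →* MulAut N)
    (k : Type*) [Field k] [IsAlgClosed k] (m : ℕ) (f : Subfield k)
    (P : Matrix.GeneralLinearGroup (Fin m) k →*
        Matrix.GeneralLinearGroup (Fin m) k ⧸ Subgroup.center (Matrix.GeneralLinearGroup (Fin m) k))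
    (hP : P = QuotientGroup.mk' (Subgroup.center (Matrix.GeneralLinearGroup (Fin m) k)))
    (Gf : Set (Matrix.GeneralLinearGroup (Fin m) k ⧸
        Subgroup.center (Matrix.GeneralLinearGroup (Fin m) k)))
    (hGf : Gf = {x | ∃ M : Matrix.GeneralLinearGroup (Fin m) k,
      (∀ i j : Fin m, (M : Matrix (Fin m) (Fin m) k) i j ∈ f) ∧ P M = x})
    (ρ : N ⋊[φ] Q →* Matrix.GeneralLinearGroup (Fin m) k)
    -- irreducibility of `ρ|_N`:
    (hirr : ∀ U : Submodule k (Fin m → k),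
      (∀ (α : N), ∀ x ∈ U, Matrix.mulVec ((ρ (inl α) : Matrix (Fin m) (Fin m) k)) x ∈ U) →
      U = ⊥ ∨ U = ⊤)
    -- `P∘ρ|_N` takes values in `G_f`:
    (hval : ∀ α : N, P (ρ (inl α)) ∈ Gf)
    (S : Set N) (hSgen : Subgroup.closure S = ⊤)
    (htr : ∀ α ∈ S, Matrix.trace ((ρ (inl α) : Matrix (Fin m) (Fin m) k)) ≠ 0) :
    ∀ x : N ⋊[φ] Q, P (ρ x) ∈ Gf := by
  subst hP hGf
  have hinl : ∀ α : N, QuotientGroup.mk' _ (ρ (inl α)) ∈ f.projGL (Fin m) := hval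
  have hinr (q : Q) : QuotientGroup.mk' _ (ρ (inr q)) ∈ f.projGL (Fin m) :=
    f.mk_mem_projGL_of_forall_conj (ρ.comp inl) hirr hSgen htr (fun α _ => hinl α) _
      fun α _ => by simpa [inl_aut] using hinl (φ q α)
  intro x
  rw [← inl_left_mul_inr_right x, map_mul, map_mul]
  exact Subfield.mul_mem_projGL (hinl _) (hinr _)
end

section
/- Let Γ = N ⋊ Q with N finitely generated, k an algebraically closed field, and ρ : Γ → GL_m(k) a homomorphism such that ρ(N) is Zariski dense in GL_m(k). Then N admits a finite generating set S such that ρ(α) has nonzero trace for every α ∈ S. -/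
/-!
Since `ρ(N)` is Zariski dense and `k` is infinite, some `ρ(α₀)` avoids the zero set of the
nonzero polynomial `∏_{α ∈ {1} ∪ S₀} trace (X · ρ(α))`, where `S₀` generates `N`; each factor
is nonzero because it is linear in `X` with coefficients the entries of the invertible `ρ(α)`.
Then `S = α₀ · ({1} ∪ S₀)` generates `N` and `trace ρ(α₀ α) = trace (ρ(α₀) ρ(α)) ≠ 0`.
-/

open MvPolynomial Matrix

theorem Subgroup.closure_le_closure_image_mul_left_insert_one {G : Type*} [Group G]
    (g : G) (s : Set G) :
    closure s ≤ closure ((g * ·) '' insert 1 s) := by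
  rw [closure_le]
  intro x hx
  have hg : g ∈ closure ((g * ·) '' insert 1 s) :=
    subset_closure ⟨1, Set.mem_insert _ _, mul_one g⟩
  have hgx : g * x ∈ closure ((g * ·) '' insert 1 s) :=
    subset_closure ⟨x, Set.mem_insert_of_mem _ hx, rfl⟩
  simpa using mul_mem (inv_mem hg) hgx

namespace Matrix

variable {n k : Type*} [Fintype n] [DecidableEq n] [Field k]

theorem eval_trace_mvPolynomialX_mul (M A : Matrix n n k) :
    eval (fun p : n × n => M p.1 p.2) (mvPolynomialX n n k * A.map C).trace = (M * A).trace := by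
  rw [AddMonoidHom.map_trace, Matrix.map_mul, ← RingHom.mapMatrix_apply,
    mvPolynomialX_mapMatrix_eval]
  congr
  ext i j
  simp

theorem trace_mvPolynomialX_mul_ne_zero {A : Matrix n n k} (hA : A ≠ 0) :
    (mvPolynomialX n n k * A.map C).trace ≠ 0 := by
  obtain ⟨i, j, hij⟩ : ∃ i j, A i j ≠ 0 := by simpa [← Matrix.ext_iff] using hA
  intro h
  have := eval_trace_mvPolynomialX_mul (single j i 1) A
  rw [h, trace_single_mul, one_smul, map_zero] at this
  exact hij this.symm

def ZariskiDenseRange {ι : Type*} (f : ι → GL n k) : Prop :=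
  ∀ p : MvPolynomial (n × n) k,
    (∀ i, eval (fun uv : n × n => (f i : Matrix n n k) uv.1 uv.2) p = 0) →
    ∀ M : GL n k, eval (fun uv : n × n => (M : Matrix n n k) uv.1 uv.2) p = 0

-- Multiplying by `det` makes any point where `p` survives an invertible matrix.
theorem ZariskiDenseRange.exists_eval_ne_zero [Infinite k] {ι : Type*} {f : ι → GL n k}
    (hf : ZariskiDenseRange f) {p : MvPolynomial (n × n) k} (hp : p ≠ 0) :
    ∃ i, eval (fun uv : n × n => (f i : Matrix n n k) uv.1 uv.2) p ≠ 0 := by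
  by_contra! hvanish
  obtain ⟨v, hv⟩ : ∃ v, eval v ((mvPolynomialX n n k).det * p) ≠ 0 := by
    by_contra! h
    exact mul_ne_zero (det_mvPolynomialX_ne_zero n k) hp (MvPolynomial.funext (by simpa using h))
  rw [map_mul] at hv
  set M : Matrix n n k := Matrix.of fun i j => v (i, j)
  have hM : IsUnit M := by
    have hdet : eval v (mvPolynomialX n n k).det = M.det := by
      rw [RingHom.map_det]
      exact congrArg det (mvPolynomialX_mapMatrix_eval M)
    rw [isUnit_iff_isUnit_det, isUnit_iff_ne_zero, ← hdet]
    exact left_ne_zero_of_mul hv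
  exact right_ne_zero_of_mul hv (hf p hvanish hM.unit)

end Matrix

open SemidirectProduct

/-- Let `Γ = N ⋊ Q` with `N` finitely generated, `k` algebraically
closed, and `ρ : Γ → GL_m(k)` such that `ρ(N)` is Zariski dense in `GL_m(k)` (every
polynomial in the matrix entries vanishing on `ρ(N)` vanishes on all of `GL_m(k)`).
Then `N` admits a finite generating set `S` such that `trace ρ(α) ≠ 0` for every
`α ∈ S`. -/
theorem exists_generating_set_with_nonzero_traces
    {N Q : Type*} [Group N] [Group Q] (φ : Q →* MulAut N)
    (k : Type*) [Field k] [IsAlgClosed k] (m : ℕ) (hm : 0 < m)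
    (hfg : Group.FG N)
    (ρ : N ⋊[φ] Q →* Matrix.GeneralLinearGroup (Fin m) k)
    (hdense : ∀ p : MvPolynomial (Fin m × Fin m) k,
      (∀ α : N,
        MvPolynomial.eval
          (fun uv : Fin m × Fin m => (ρ (inl α) : Matrix (Fin m) (Fin m) k) uv.1 uv.2) p = 0) →
      ∀ M : Matrix.GeneralLinearGroup (Fin m) k,
        MvPolynomial.eval
          (fun uv : Fin m × Fin m => (M : Matrix (Fin m) (Fin m) k) uv.1 uv.2) p = 0) :
    ∃ S : Finset N, Subgroup.closure (S : Set N) = ⊤ ∧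
      ∀ α ∈ S, Matrix.trace ((ρ (inl α) : Matrix (Fin m) (Fin m) k)) ≠ 0 := by
  classical
  have : Nonempty (Fin m) := ⟨⟨0, hm⟩⟩
  obtain ⟨S₀, hS₀⟩ := hfg.out
  have hp : ∏ α ∈ insert 1 S₀, (mvPolynomialX (Fin m) (Fin m) k *
      (ρ (inl α) : Matrix (Fin m) (Fin m) k).map C).trace ≠ 0 :=
    Finset.prod_ne_zero_iff.mpr fun α _ =>
      trace_mvPolynomialX_mul_ne_zero (ρ (inl α)).isUnit.ne_zero
  obtain ⟨α₀, hα₀⟩ := ZariskiDenseRange.exists_eval_ne_zero (f := fun α => ρ (inl α)) hdense hp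
  rw [map_prod, Finset.prod_ne_zero_iff] at hα₀
  refine ⟨(insert 1 S₀).image (α₀ * ·), ?_, ?_⟩
  · rw [eq_top_iff, ← hS₀]
    push_cast
    exact Subgroup.closure_le_closure_image_mul_left_insert_one α₀ _
  · simp only [Finset.forall_mem_image]
    intro α hα
    simpa [eval_trace_mvPolynomialX_mul] using hα₀ α hα
end
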